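/- Multi-copy distinguishability, lower bound (corrected form of the paper's Lemma 2.1, left inequality): Let ρ₀, ρ₁ be density matrices on ℂ^d, set T = (1/2)·‖ρ₀ − ρ₁‖₁, and let n ≥ 1 be a natural number. Then 1 − (√(1 − T²))^n ≤ (1/2)·‖ρ₀^{⊗n} − ρ₁^{⊗n}‖₁. -/

import Mathlib

/-
Write `R = √ρ₀`, `S = √ρ₁` and `H = Re Tr (R S)` for the affinity of the two states. Because
`2 (ρ₀ - ρ₁) = (R - S)(R + S) + (R + S)(R - S)` and `Re Tr (R ∓ S)² = 2 ∓ 2H`, testing `ρ₀ - ρ₁`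
against the sign of `R - S` gives the Powers–Størmer bound `1 - H ≤ T`, while testing it against its
own sign and applying Cauchy–Schwarz gives `T² ≤ 1 - H²`, i.e. `H ≤ √(1 - T²)`. The affinity is
multiplicative under tensor powers, so Powers–Størmer for `ρ₀^{⊗n}, ρ₁^{⊗n}` yields
`1 - Hⁿ ≤ ½ ‖ρ₀^{⊗n} - ρ₁^{⊗n}‖₁`.
-/

open Matrix BigOperators
open scoped ComplexOrder

open Classical in
noncomputable def msqrt {n : Type*} [Fintype n] [DecidableEq n] (A : Matrix n n ℂ) :
    Matrix n n ℂ :=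
  if h : A.PosSemidef then
    h.1.eigenvectorUnitary.1 * diagonal ((↑) ∘ (√·) ∘ h.1.eigenvalues) *
      (star h.1.eigenvectorUnitary : Matrix n n ℂ)
  else 0

noncomputable def traceNorm {n : Type*} [Fintype n] [DecidableEq n] (A : Matrix n n ℂ) : ℝ :=
  (msqrt (Aᴴ * A)).trace.re

noncomputable def fidelity {n : Type*} [Fintype n] [DecidableEq n] (ρ₀ ρ₁ : Matrix n n ℂ) : ℝ :=
  ((msqrt (msqrt ρ₀ * ρ₁ * msqrt ρ₀)).trace.re) ^ 2

noncomputable def tensorPow {d : ℕ} (ρ : Matrix (Fin d) (Fin d) ℂ) (n : ℕ) :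
    Matrix (Fin n → Fin d) (Fin n → Fin d) ℂ :=
  Matrix.of fun i j => ∏ k, ρ (i k) (j k)

open scoped MatrixOrder

lemma Real.sign_mul_self_eq_abs (x : ℝ) : Real.sign x * x = |x| := by
  rcases lt_trichotomy x 0 with hx | rfl | hx
  · rw [Real.sign_of_neg hx, abs_of_neg hx, neg_one_mul]
  · simp
  · rw [Real.sign_of_pos hx, abs_of_pos hx, one_mul]

namespace Matrix

variable {n 𝕜 : Type*} [Fintype n] [RCLike 𝕜]

lemma re_trace_mul_mul_comm {X Y Z : Matrix n n 𝕜} (hX : X.IsHermitian) (hY : Y.IsHermitian)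
    (hZ : Z.IsHermitian) : RCLike.re (X * Y * Z).trace = RCLike.re (X * Z * Y).trace := by
  rw [← RCLike.conj_re, ← RCLike.star_def, ← trace_conjTranspose, conjTranspose_mul,
    conjTranspose_mul, hX.eq, hY.eq, hZ.eq, ← mul_assoc, trace_mul_cycle]

variable [DecidableEq n]

lemma re_trace_mul_sq_le (X Y : Matrix n n 𝕜) :
    RCLike.re (X * Y).trace ^ 2 ≤ RCLike.re (Xᴴ * X).trace * RCLike.re (Yᴴ * Y).trace := by
  let _ := Matrix.toMatrixSeminormedAddCommGroup (1 : Matrix n n 𝕜) PosSemidef.one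
  let _ := Matrix.toMatrixInnerProductSpace (1 : Matrix n n 𝕜) PosSemidef.one
  have h := inner_mul_inner_self_le (𝕜 := 𝕜) Xᴴ Y
  change ‖(Y * 1 * Xᴴᴴ).trace‖ * ‖(Xᴴ * 1 * Yᴴ).trace‖ ≤
    RCLike.re (Xᴴ * 1 * Xᴴᴴ).trace * RCLike.re (Y * 1 * Yᴴ).trace at h
  simp only [mul_one] at h
  rw [conjTranspose_conjTranspose, ← conjTranspose_mul, trace_conjTranspose, norm_star,
    trace_mul_comm Y, trace_mul_comm Y] at h
  calc RCLike.re (X * Y).trace ^ 2 ≤ ‖(X * Y).trace‖ ^ 2 :=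
        sq_le_sq.mpr ((RCLike.abs_re_le_norm _).trans (abs_norm _).ge)
    _ ≤ _ := by rw [sq]; exact h

lemma trace_mul_nonneg {A B : Matrix n n 𝕜} (hA : 0 ≤ A) (hB : 0 ≤ B) : 0 ≤ (A * B).trace := by
  have hsq : CFC.sqrt A * CFC.sqrt A = A := CFC.sqrt_mul_sqrt_self A hA
  have hsa : (CFC.sqrt A)ᴴ = CFC.sqrt A := (CFC.sqrt_nonneg A).isSelfAdjoint
  rw [← hsq, mul_assoc, trace_mul_comm, mul_assoc]
  simpa [hsa, mul_assoc] using (hB.posSemidef.mul_mul_conjTranspose_same (CFC.sqrt A)).trace_nonneg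

lemma re_trace_mul_nonneg {A B : Matrix n n 𝕜} (hA : 0 ≤ A) (hB : 0 ≤ B) :
    0 ≤ RCLike.re (A * B).trace :=
  (RCLike.nonneg_iff.mp (trace_mul_nonneg hA hB)).1

lemma continuousOn_spectrum (A : Matrix n n 𝕜) (f : ℝ → ℝ) : ContinuousOn f (spectrum ℝ A) :=
  A.finite_real_spectrum.continuousOn f

variable {A : Matrix n n 𝕜}

lemma cfc_sign_mul_self (hA : IsSelfAdjoint A) : cfc Real.sign A * A = CFC.abs A := by
  nth_rewrite 2 [← cfc_id' ℝ A]
  rw [← cfc_mul _ _ A (A.continuousOn_spectrum _) (A.continuousOn_spectrum _),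
    CFC.abs_eq_cfc_norm A]
  exact cfc_congr fun x _ => by rw [Real.sign_mul_self_eq_abs, Real.norm_eq_abs]

lemma neg_one_le_cfc_sign (hA : IsSelfAdjoint A) : -1 ≤ cfc Real.sign A := by
  simpa using algebraMap_le_cfc Real.sign (-1) A
    (fun x _ => by rcases Real.sign_apply_eq x with h | h | h <;> simp [h])
    (A.continuousOn_spectrum _)

lemma cfc_sign_le_one : cfc Real.sign A ≤ 1 :=
  cfc_le_one _ _ fun x _ => by rcases Real.sign_apply_eq x with h | h | h <;> simp [h]

lemma cfc_sign_mul_cfc_sign_le_one : cfc Real.sign A * cfc Real.sign A ≤ 1 := by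
  rw [← cfc_mul _ _ A (A.continuousOn_spectrum _) (A.continuousOn_spectrum _)]
  exact cfc_le_one _ _ fun x _ => by rcases Real.sign_apply_eq x with h | h | h <;> simp [h]

lemma re_trace_mul_le_re_trace_abs {A W : Matrix n n 𝕜} (hA : IsSelfAdjoint A) (hW₁ : -1 ≤ W)
    (hW₂ : W ≤ 1) : RCLike.re (W * A).trace ≤ RCLike.re (CFC.abs A).trace := by
  have key : CFC.abs A - W * A = (1 - W) * A⁺ + (W + 1) * A⁻ := by
    nth_rewrite 2 [← CFC.posPart_sub_negPart A]
    rw [← CFC.posPart_add_negPart A]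
    noncomm_ring
  have hP := re_trace_mul_nonneg (sub_nonneg.mpr hW₂) (CFC.posPart_nonneg A)
  have hN := re_trace_mul_nonneg (neg_le_iff_add_nonneg.mp hW₁) (CFC.negPart_nonneg A)
  have h := congrArg (fun M => RCLike.re M.trace) key
  simp only [trace_sub, trace_add, map_sub, map_add] at h
  linarith

lemma re_trace_mul_sq_sub_sq {R S U : Matrix n n 𝕜} (hR : R.IsHermitian) (hS : S.IsHermitian)
    (hU : U.IsHermitian) :
    RCLike.re (U * (R ^ 2 - S ^ 2)).trace = RCLike.re (U * (R - S) * (R + S)).trace := by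
  have h : U * (R ^ 2 - S ^ 2) + U * (R ^ 2 - S ^ 2) =
      U * (R - S) * (R + S) + U * (R + S) * (R - S) := by noncomm_ring
  have h' := congrArg (fun M => RCLike.re M.trace) h
  simp only [trace_add, map_add] at h'
  rw [re_trace_mul_mul_comm hU (hR.add hS) (hR.sub hS)] at h'
  linarith

lemma re_trace_sub_sq_le_re_trace_abs_mul_add {R S : Matrix n n 𝕜} (hR : 0 ≤ R) (hS : 0 ≤ S) :
    RCLike.re ((R - S) ^ 2).trace ≤ RCLike.re (CFC.abs (R - S) * (R + S)).trace := by
  have key : CFC.abs (R - S) * (R + S) - (R - S) ^ 2 =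
      (R - S)⁺ * (S + S) + (R - S)⁻ * (R + R) := by
    rw [sq]
    nth_rewrite 2 [← CFC.posPart_sub_negPart (R - S) (hR.isSelfAdjoint.sub hS.isSelfAdjoint)]
    rw [← CFC.posPart_add_negPart (R - S) (hR.isSelfAdjoint.sub hS.isSelfAdjoint)]
    noncomm_ring
  have hP := re_trace_mul_nonneg (CFC.posPart_nonneg (R - S)) (add_nonneg hS hS)
  have hN := re_trace_mul_nonneg (CFC.negPart_nonneg (R - S)) (add_nonneg hR hR)
  have h := congrArg (fun M => RCLike.re M.trace) key
  simp only [trace_sub, trace_add, map_sub, map_add] at h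
  linarith

theorem re_trace_sub_sq_le_re_trace_abs_sq_sub {R S : Matrix n n 𝕜} (hR : 0 ≤ R) (hS : 0 ≤ S) :
    RCLike.re ((R - S) ^ 2).trace ≤ RCLike.re (CFC.abs (R ^ 2 - S ^ 2)).trace := by
  have hD : IsSelfAdjoint (R - S) := hR.isSelfAdjoint.sub hS.isSelfAdjoint
  calc RCLike.re ((R - S) ^ 2).trace
      ≤ RCLike.re (CFC.abs (R - S) * (R + S)).trace :=
        re_trace_sub_sq_le_re_trace_abs_mul_add hR hS
    _ = RCLike.re (cfc Real.sign (R - S) * (R - S) * (R + S)).trace := by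
      rw [cfc_sign_mul_self hD]
    _ = RCLike.re (cfc Real.sign (R - S) * (R ^ 2 - S ^ 2)).trace :=
      (re_trace_mul_sq_sub_sq hR.isSelfAdjoint hS.isSelfAdjoint (cfc_predicate _ _)).symm
    _ ≤ RCLike.re (CFC.abs (R ^ 2 - S ^ 2)).trace :=
      re_trace_mul_le_re_trace_abs ((hR.isSelfAdjoint.pow 2).sub (hS.isSelfAdjoint.pow 2))
        (neg_one_le_cfc_sign hD) cfc_sign_le_one

theorem sq_re_trace_abs_sq_sub_sq_le {R S : Matrix n n 𝕜} (hR : R.IsHermitian)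
    (hS : S.IsHermitian) :
    RCLike.re (CFC.abs (R ^ 2 - S ^ 2)).trace ^ 2 ≤
      RCLike.re ((R - S) ^ 2).trace * RCLike.re ((R + S) ^ 2).trace := by
  have hM : IsSelfAdjoint (R ^ 2 - S ^ 2) := (hR.isSelfAdjoint.pow 2).sub (hS.isSelfAdjoint.pow 2)
  set U := cfc Real.sign (R ^ 2 - S ^ 2)
  have hU : U.IsHermitian := cfc_predicate _ _
  have habs : RCLike.re (CFC.abs (R ^ 2 - S ^ 2)).trace =
      RCLike.re (U * (R + S) * (R - S)).trace := by
    rw [← cfc_sign_mul_self hM, re_trace_mul_sq_sub_sq hR hS hU,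
      re_trace_mul_mul_comm hU (hR.sub hS) (hR.add hS)]
  have hUU : RCLike.re ((U * (R + S))ᴴ * (U * (R + S))).trace ≤
      RCLike.re ((R + S) ^ 2).trace := by
    have h : (R + S) ^ 2 - (U * (R + S))ᴴ * (U * (R + S)) =
        (R + S)ᴴ * (1 - U * U) * (R + S) := by
      rw [conjTranspose_mul, hU.eq, (hR.add hS).eq]
      noncomm_ring
    have h1 : (1 - U * U).PosSemidef :=
      (sub_nonneg.mpr (cfc_sign_mul_cfc_sign_le_one (A := R ^ 2 - S ^ 2))).posSemidef
    have h0 := (RCLike.nonneg_iff.mp (h1.conjTranspose_mul_mul_same (R + S)).trace_nonneg).1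
    have h' := congrArg (fun M => RCLike.re M.trace) h
    simp only [trace_sub, map_sub] at h'
    linarith
  have hD : 0 ≤ RCLike.re ((R - S) ^ 2).trace := by
    have h := (RCLike.nonneg_iff.mp (posSemidef_conjTranspose_mul_self (R - S)).trace_nonneg).1
    rwa [(hR.sub hS).eq, ← sq] at h
  calc RCLike.re (CFC.abs (R ^ 2 - S ^ 2)).trace ^ 2
      = RCLike.re (U * (R + S) * (R - S)).trace ^ 2 := by rw [habs]
    _ ≤ RCLike.re ((U * (R + S))ᴴ * (U * (R + S))).trace *
          RCLike.re ((R - S)ᴴ * (R - S)).trace := re_trace_mul_sq_le _ _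
    _ ≤ RCLike.re ((R + S) ^ 2).trace * RCLike.re ((R - S) ^ 2).trace := by
      rw [(hR.sub hS).eq, ← sq]
      exact mul_le_mul_of_nonneg_right hUU hD
    _ = _ := mul_comm _ _

end Matrix

open Matrix

section DensityMatrix

variable {n : Type*} [Fintype n] [DecidableEq n]

lemma msqrt_eq_sqrt (A : Matrix n n ℂ) : msqrt A = CFC.sqrt A := by
  unfold msqrt
  split_ifs with h
  · rw [CFC.sqrt_eq_cfc, cfc_nnreal_eq_real _ A h.nonneg, h.1.cfc_eq]
    simp only [IsHermitian.cfc, Unitary.conjStarAlgAut_apply]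
    congr 3
    ext i
    simp [max_eq_left (h.eigenvalues_nonneg i)]
  · exact (cfcₙ_apply_of_not_predicate A (Matrix.nonneg_iff_posSemidef.not.mpr h)).symm

lemma traceNorm_eq_re_trace_abs (A : Matrix n n ℂ) : traceNorm A = (CFC.abs A).trace.re := by
  rw [traceNorm, msqrt_eq_sqrt]
  rfl

-- The trace is real by `trace_mul_nonneg`, so taking the real part loses nothing.
noncomputable def affinity (ρ σ : Matrix n n ℂ) : ℝ := (CFC.sqrt ρ * CFC.sqrt σ).trace.re

lemma affinity_nonneg (ρ σ : Matrix n n ℂ) : 0 ≤ affinity ρ σ :=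
  re_trace_mul_nonneg (CFC.sqrt_nonneg ρ) (CFC.sqrt_nonneg σ)

variable {ρ σ : Matrix n n ℂ}

lemma re_trace_sqrt_sub_sqrt_sq (hρ : 0 ≤ ρ) (hσ : 0 ≤ σ) (hρ₁ : ρ.trace = 1)
    (hσ₁ : σ.trace = 1) :
    ((CFC.sqrt ρ - CFC.sqrt σ) ^ 2).trace.re = 2 - 2 * affinity ρ σ := by
  have h : (CFC.sqrt ρ - CFC.sqrt σ) ^ 2 =
      CFC.sqrt ρ ^ 2 + CFC.sqrt σ ^ 2 - CFC.sqrt ρ * CFC.sqrt σ - CFC.sqrt σ * CFC.sqrt ρ := by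
    noncomm_ring
  rw [h, trace_sub, trace_sub, trace_add, trace_mul_comm (CFC.sqrt σ), CFC.sq_sqrt ρ hρ,
    CFC.sq_sqrt σ hσ, hρ₁, hσ₁, affinity]
  simp only [Complex.sub_re, Complex.add_re, Complex.one_re]
  ring

lemma re_trace_sqrt_add_sqrt_sq (hρ : 0 ≤ ρ) (hσ : 0 ≤ σ) (hρ₁ : ρ.trace = 1)
    (hσ₁ : σ.trace = 1) :
    ((CFC.sqrt ρ + CFC.sqrt σ) ^ 2).trace.re = 2 + 2 * affinity ρ σ := by
  have h : (CFC.sqrt ρ + CFC.sqrt σ) ^ 2 =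
      CFC.sqrt ρ ^ 2 + CFC.sqrt σ ^ 2 + CFC.sqrt ρ * CFC.sqrt σ + CFC.sqrt σ * CFC.sqrt ρ := by
    noncomm_ring
  rw [h, trace_add, trace_add, trace_add, trace_mul_comm (CFC.sqrt σ), CFC.sq_sqrt ρ hρ,
    CFC.sq_sqrt σ hσ, hρ₁, hσ₁, affinity]
  simp only [Complex.add_re, Complex.one_re]
  ring

theorem two_sub_two_mul_affinity_le_traceNorm (hρ : 0 ≤ ρ) (hσ : 0 ≤ σ) (hρ₁ : ρ.trace = 1)
    (hσ₁ : σ.trace = 1) : 2 - 2 * affinity ρ σ ≤ traceNorm (ρ - σ) := by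
  have h := re_trace_sub_sq_le_re_trace_abs_sq_sub (CFC.sqrt_nonneg ρ) (CFC.sqrt_nonneg σ)
  rwa [RCLike.re_to_complex, RCLike.re_to_complex, CFC.sq_sqrt ρ hρ, CFC.sq_sqrt σ hσ,
    ← traceNorm_eq_re_trace_abs, re_trace_sqrt_sub_sqrt_sq hρ hσ hρ₁ hσ₁] at h

theorem traceNorm_sq_le_four_mul_one_sub_affinity_sq (hρ : 0 ≤ ρ) (hσ : 0 ≤ σ)
    (hρ₁ : ρ.trace = 1) (hσ₁ : σ.trace = 1) :
    traceNorm (ρ - σ) ^ 2 ≤ 4 * (1 - affinity ρ σ ^ 2) := by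
  have h := sq_re_trace_abs_sq_sub_sq_le (CFC.sqrt_nonneg ρ).isSelfAdjoint
    (CFC.sqrt_nonneg σ).isSelfAdjoint
  simp only [RCLike.re_to_complex] at h
  rw [CFC.sq_sqrt ρ hρ, CFC.sq_sqrt σ hσ, ← traceNorm_eq_re_trace_abs,
    re_trace_sqrt_sub_sqrt_sq hρ hσ hρ₁ hσ₁, re_trace_sqrt_add_sqrt_sq hρ hσ hρ₁ hσ₁] at h
  linarith

end DensityMatrix

section TensorPower

variable {d : ℕ}

lemma tensorPow_mul (A B : Matrix (Fin d) (Fin d) ℂ) (n : ℕ) :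
    tensorPow A n * tensorPow B n = tensorPow (A * B) n := by
  ext i j
  simp only [tensorPow, mul_apply, of_apply, ← Finset.prod_mul_distrib]
  exact (Fintype.prod_sum fun k t => A (i k) t * B t (j k)).symm

lemma conjTranspose_tensorPow (A : Matrix (Fin d) (Fin d) ℂ) (n : ℕ) :
    (tensorPow A n)ᴴ = tensorPow Aᴴ n := by
  ext i j
  simp [tensorPow, conjTranspose_apply, star_prod]

lemma trace_tensorPow (A : Matrix (Fin d) (Fin d) ℂ) (n : ℕ) :
    (tensorPow A n).trace = A.trace ^ n := by
  rw [trace, trace, Fintype.sum_pow]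
  rfl

lemma tensorPow_nonneg {A : Matrix (Fin d) (Fin d) ℂ} (hA : 0 ≤ A) (n : ℕ) :
    0 ≤ tensorPow A n := by
  have hs : (CFC.sqrt A)ᴴ = CFC.sqrt A := (CFC.sqrt_nonneg A).isSelfAdjoint
  rw [← CFC.sqrt_mul_sqrt_self A hA, ← tensorPow_mul]
  nth_rewrite 1 [← hs]
  rw [← conjTranspose_tensorPow]
  exact star_mul_self_nonneg _

lemma sqrt_tensorPow {A : Matrix (Fin d) (Fin d) ℂ} (hA : 0 ≤ A) (n : ℕ) :
    CFC.sqrt (tensorPow A n) = tensorPow (CFC.sqrt A) n :=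
  (CFC.sqrt_eq_iff _ _ (tensorPow_nonneg hA n) (tensorPow_nonneg (CFC.sqrt_nonneg A) n)).mpr
    (by rw [tensorPow_mul, CFC.sqrt_mul_sqrt_self A hA])

lemma affinity_tensorPow {ρ σ : Matrix (Fin d) (Fin d) ℂ} (hρ : 0 ≤ ρ) (hσ : 0 ≤ σ) (n : ℕ) :
    affinity (tensorPow ρ n) (tensorPow σ n) = affinity ρ σ ^ n := by
  rw [affinity, sqrt_tensorPow hρ, sqrt_tensorPow hσ, tensorPow_mul, trace_tensorPow,
    Complex.eq_re_of_ofReal_le (trace_mul_nonneg (CFC.sqrt_nonneg ρ) (CFC.sqrt_nonneg σ)),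
    ← Complex.ofReal_pow, Complex.ofReal_re, affinity]

end TensorPower

theorem multi_copy_distinguishability_lower_general {d : ℕ} (ρ₀ ρ₁ : Matrix (Fin d) (Fin d) ℂ)
    (hρ₀ : ρ₀.PosSemidef) (hρ₀t : ρ₀.trace = 1)
    (hρ₁ : ρ₁.PosSemidef) (hρ₁t : ρ₁.trace = 1)
    (n : ℕ) :
    1 - (Real.sqrt (1 - ((1 / 2) * traceNorm (ρ₀ - ρ₁)) ^ 2)) ^ n ≤
      (1 / 2) * traceNorm (tensorPow ρ₀ n - tensorPow ρ₁ n) := by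
  set T := (1 / 2) * traceNorm (ρ₀ - ρ₁) with hT_def
  set H := affinity ρ₀ ρ₁
  have hT : T ^ 2 ≤ 1 - H ^ 2 := by
    rw [hT_def]
    nlinarith [traceNorm_sq_le_four_mul_one_sub_affinity_sq hρ₀.nonneg hρ₁.nonneg hρ₀t hρ₁t]
  have hH : H ≤ Real.sqrt (1 - T ^ 2) := (le_abs_self H).trans (Real.abs_le_sqrt (by linarith))
  have hcopies := two_sub_two_mul_affinity_le_traceNorm (tensorPow_nonneg hρ₀.nonneg n)
    (tensorPow_nonneg hρ₁.nonneg n) (by rw [trace_tensorPow, hρ₀t, one_pow])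
    (by rw [trace_tensorPow, hρ₁t, one_pow])
  rw [affinity_tensorPow hρ₀.nonneg hρ₁.nonneg] at hcopies
  linarith [pow_le_pow_left₀ (affinity_nonneg ρ₀ ρ₁) hH n]

/-- Multi-copy distinguishability, lower bound. -/
theorem multi_copy_distinguishability_lower {d : ℕ} (ρ₀ ρ₁ : Matrix (Fin d) (Fin d) ℂ)
    (hρ₀ : ρ₀.PosSemidef) (hρ₀t : ρ₀.trace = 1)
    (hρ₁ : ρ₁.PosSemidef) (hρ₁t : ρ₁.trace = 1)
    (n : ℕ) (hn : 1 ≤ n) :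
    1 - (Real.sqrt (1 - ((1 / 2) * traceNorm (ρ₀ - ρ₁)) ^ 2)) ^ n ≤
      (1 / 2) * traceNorm (tensorPow ρ₀ n - tensorPow ρ₁ n) :=
  multi_copy_distinguishability_lower_general ρ₀ ρ₁ hρ₀ hρ₀t hρ₁ hρ₁t n
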